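/- arXiv:2510.08287 — 5 statements merged into one kernel-verified Lean document; each statement's English description precedes it below -/
import Mathlib

section
/- Let K be a nonempty compact topological space and let δ ∈ (0,2). Let f : ℝ → ℝ be a continuous function that is analytic at every point of the open interval (−1+δ/2, 1−δ/2). Then the superposition operator Φ on the Banach space C(K,ℝ), defined by Φ(u)(x) = f(u(x)), is analytic (in the sense of analytic maps between Banach spaces, i.e. AnalyticAt) at every point u of the open set 𝒰 = {u ∈ C(K,ℝ) : −1+δ < u(x) < 1−δ for all x ∈ K}. -/
/-!
Around each point of the compact set `u(K)` the power series of `f` can be re-expanded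
(`changeOrigin`) with one radius and one bound on `‖p n‖ rⁿ`; by compactness, a single radius `r`
and bound `C` serve for every `t ∈ u(K)`. The Taylor coefficients `f⁽ⁿ⁾(u x) / n!` are then
continuous functions `gₙ` of `x` with `‖gₙ‖ rⁿ ≤ C`, so `∑ gₙ vⁿ` is a power series on
`C(K, ℝ)` of radius at least `r`, and evaluating at each `x` shows that it sums to `f ∘ (u + v)`.
-/

open scoped NNReal ENNReal Nat Topology
open FormalMultilinearSeries

section PowerSeriesBounds

variable (𝕜 : Type*) {E F : Type*} [NontriviallyNormedField 𝕜] [NormedAddCommGroup E]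
  [NormedSpace 𝕜 E] [NormedAddCommGroup F] [NormedSpace 𝕜 F]

def HasBoundedFPowerSeriesOnBall (f : E → F) (x : E) (r C : ℝ≥0) : Prop :=
  ∃ p : FormalMultilinearSeries 𝕜 E F,
    HasFPowerSeriesOnBall f p x r ∧ ∀ n, ‖p n‖ * (r : ℝ) ^ n ≤ C

variable {𝕜} {f : E → F} {x : E} {r r' C C' : ℝ≥0}

theorem HasBoundedFPowerSeriesOnBall.mono (h : HasBoundedFPowerSeriesOnBall 𝕜 f x r C)
    (hr' : 0 < r') (hr : r' ≤ r) (hC : C ≤ C') : HasBoundedFPowerSeriesOnBall 𝕜 f x r' C' := by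
  obtain ⟨p, hp, hpC⟩ := h
  refine ⟨p, hp.mono (by exact_mod_cast hr') (by exact_mod_cast hr), fun n => ?_⟩
  calc ‖p n‖ * (r' : ℝ) ^ n ≤ ‖p n‖ * (r : ℝ) ^ n := by gcongr
    _ ≤ C' := (hpC n).trans (by exact_mod_cast hC)

theorem FormalMultilinearSeries.nnnorm_changeOrigin_mul_pow_le (p : FormalMultilinearSeries 𝕜 E F)
    {a b : ℝ≥0} (hab : (a + b : ℝ≥0∞) < p.radius) {y : E} (hy : ‖y‖₊ ≤ a) (n : ℕ) :
    ‖p.changeOrigin y n‖₊ * b ^ n ≤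
      ∑' σ : (Σ k l : ℕ, { s : Finset (Fin (k + l)) // s.card = l }),
        ‖p (σ.1 + σ.2.1)‖₊ * a ^ σ.2.1 * b ^ σ.1 := by
  have hy' : (‖y‖₊ : ℝ≥0∞) < p.radius :=
    lt_of_le_of_lt (by exact_mod_cast hy.trans le_self_add) hab
  have hsum := p.changeOriginSeries_summable_aux₁ hab
  calc ‖p.changeOrigin y n‖₊ * b ^ n
      ≤ (∑' σ : (Σ l : ℕ, { s : Finset (Fin (n + l)) // s.card = l }),
          ‖p (n + σ.1)‖₊ * ‖y‖₊ ^ σ.1) * b ^ n :=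
        mul_le_mul_left (p.nnnorm_changeOrigin_le n hy') _
    _ = ∑' σ : (Σ l : ℕ, { s : Finset (Fin (n + l)) // s.card = l }),
          ‖p (n + σ.1)‖₊ * ‖y‖₊ ^ σ.1 * b ^ n := (NNReal.tsum_mul_right _ _).symm
    _ ≤ ∑' σ : (Σ l : ℕ, { s : Finset (Fin (n + l)) // s.card = l }),
          ‖p (n + σ.1)‖₊ * a ^ σ.1 * b ^ n := by
        have hsum_n : Summable fun σ : (Σ l : ℕ, { s : Finset (Fin (n + l)) // s.card = l }) =>
            ‖p (n + σ.1)‖₊ * a ^ σ.1 * b ^ n :=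
          (NNReal.summable_sigma.1 hsum).1 n
        refine Summable.tsum_le_tsum (fun σ => by gcongr) ?_ hsum_n
        exact NNReal.summable_of_le (fun σ => by gcongr) hsum_n
    _ ≤ _ := by
        rw [hsum.tsum_sigma' (NNReal.summable_sigma.1 hsum).1]
        exact (NNReal.summable_sigma.1 hsum).2.le_tsum n fun _ _ => zero_le

theorem HasFPowerSeriesOnBall.exists_hasBoundedFPowerSeriesOnBall [CompleteSpace F]
    {p : FormalMultilinearSeries 𝕜 E F} {R : ℝ≥0∞} (hf : HasFPowerSeriesOnBall f p x R)
    {a b : ℝ≥0} (hb : 0 < b) (hab : (a + b : ℝ≥0∞) < R) :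
    ∃ C, ∀ z ∈ Metric.ball x a, HasBoundedFPowerSeriesOnBall 𝕜 f z b C := by
  refine ⟨∑' σ : (Σ k l : ℕ, { s : Finset (Fin (k + l)) // s.card = l }),
    ‖p (σ.1 + σ.2.1)‖₊ * a ^ σ.2.1 * b ^ σ.1, fun z hz => ⟨p.changeOrigin (z - x), ?_, fun n => ?_⟩⟩
  · have hza : ‖z - x‖₊ + b < (a + b : ℝ≥0∞) := by
      gcongr
      · exact ENNReal.coe_ne_top
      · exact_mod_cast mem_ball_iff_norm.1 hz
    have h := hf.changeOrigin (lt_of_le_of_lt le_self_add (hza.trans hab))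
    rw [add_sub_cancel] at h
    refine h.mono (by exact_mod_cast hb) ?_
    exact ENNReal.le_sub_of_add_le_left ENNReal.coe_ne_top ((hza.trans hab).le)
  · have hz' : ‖z - x‖₊ ≤ a := by exact_mod_cast (mem_ball_iff_norm.1 hz).le
    exact_mod_cast p.nnnorm_changeOrigin_mul_pow_le (hab.trans_le hf.r_le) hz' n

theorem AnalyticAt.exists_eventually_hasBoundedFPowerSeriesOnBall [CompleteSpace F]
    (hf : AnalyticAt 𝕜 f x) :
    ∃ r > 0, ∃ C, ∀ᶠ z in 𝓝 x, HasBoundedFPowerSeriesOnBall 𝕜 f z r C := by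
  obtain ⟨p, R, hp⟩ := hf
  obtain ⟨ρ, hρ, hρR⟩ := ENNReal.lt_iff_exists_nnreal_btwn.1 hp.r_pos
  have hρ' : 0 < ρ / 2 := by simpa using hρ
  obtain ⟨C, hC⟩ := hp.exists_hasBoundedFPowerSeriesOnBall hρ' (a := ρ / 2)
    (by rwa [← ENNReal.coe_add, add_halves])
  exact ⟨ρ / 2, hρ', C, Filter.eventually_of_mem (Metric.ball_mem_nhds x hρ') hC⟩

theorem IsCompact.exists_hasBoundedFPowerSeriesOnBall [CompleteSpace F] {s : Set E}
    (hs : IsCompact s) (hf : ∀ x ∈ s, AnalyticAt 𝕜 f x) :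
    ∃ r > 0, ∃ C, ∀ z ∈ s, HasBoundedFPowerSeriesOnBall 𝕜 f z r C := by
  refine hs.induction_on
    (p := fun t => ∃ r > 0, ∃ C, ∀ z ∈ t, HasBoundedFPowerSeriesOnBall 𝕜 f z r C)
    ⟨1, one_pos, 0, by simp⟩ ?_ ?_ fun x hx => ?_
  · rintro t t' htt' ⟨r, hr, C, hC⟩
    exact ⟨r, hr, C, fun z hz => hC z (htt' hz)⟩
  · rintro t t' ⟨r, hr, C, hC⟩ ⟨r', hr', C', hC'⟩
    refine ⟨min r r', lt_min hr hr', max C C', fun z hz => hz.elim (fun hz => ?_) fun hz => ?_⟩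
    · exact (hC z hz).mono (lt_min hr hr') (min_le_left _ _) (le_max_left _ _)
    · exact (hC' z hz).mono (lt_min hr hr') (min_le_right _ _) (le_max_right _ _)
  · obtain ⟨r, hr, C, hC⟩ := (hf x hx).exists_eventually_hasBoundedFPowerSeriesOnBall
    exact ⟨_, mem_nhdsWithin_of_mem_nhds hC, r, hr, C, fun z hz => hz⟩

end PowerSeriesBounds

theorem HasFPowerSeriesOnBall.eq_ofScalars_iteratedDeriv {𝕜 : Type*} [NontriviallyNormedField 𝕜]
    [CompleteSpace 𝕜] [CharZero 𝕜] {f : 𝕜 → 𝕜} {p : FormalMultilinearSeries 𝕜 𝕜 𝕜} {x : 𝕜}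
    {r : ℝ≥0∞} (hf : HasFPowerSeriesOnBall f p x r) :
    p = ofScalars 𝕜 fun n => iteratedDeriv n f x / n ! :=
  hf.hasFPowerSeriesAt.eq_formalMultilinearSeries hf.analyticAt.hasFPowerSeriesAt

section OfCoeffs

variable (𝕜 : Type*) {A : Type*} [NontriviallyNormedField 𝕜] [NormedRing A] [NormedAlgebra 𝕜 A]

noncomputable def FormalMultilinearSeries.ofCoeffs (g : ℕ → A) :
    FormalMultilinearSeries 𝕜 A A := fun n =>
  (ContinuousLinearMap.mul 𝕜 A (g n)).compContinuousMultilinearMap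
    (ContinuousMultilinearMap.mkPiAlgebraFin 𝕜 n A)

variable {𝕜}

theorem FormalMultilinearSeries.ofCoeffs_apply_eq (g : ℕ → A) (n : ℕ) (y : A) :
    ofCoeffs 𝕜 g n (fun _ => y) = g n * y ^ n := by
  simp [ofCoeffs, ContinuousMultilinearMap.mkPiAlgebraFin_apply]

theorem FormalMultilinearSeries.norm_ofCoeffs_le (g : ℕ → A) (n : ℕ) :
    ‖ofCoeffs 𝕜 g n‖ ≤ ‖g n‖ * max 1 ‖(1 : A)‖ :=
  (ContinuousLinearMap.norm_compContinuousMultilinearMap_le _ _).trans <|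
    mul_le_mul (ContinuousLinearMap.opNorm_mul_apply_le 𝕜 A (g n))
      ContinuousMultilinearMap.norm_mkPiAlgebraFin_le (norm_nonneg _) (norm_nonneg _)

theorem FormalMultilinearSeries.le_radius_ofCoeffs {g : ℕ → A} {r : ℝ≥0} {C : ℝ}
    (hg : ∀ n, ‖g n‖ * (r : ℝ) ^ n ≤ C) : (r : ℝ≥0∞) ≤ (ofCoeffs 𝕜 g).radius := by
  refine le_radius_of_bound _ (C * max 1 ‖(1 : A)‖) fun n => ?_
  calc ‖ofCoeffs 𝕜 g n‖ * (r : ℝ) ^ n ≤ ‖g n‖ * max 1 ‖(1 : A)‖ * (r : ℝ) ^ n := by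
        gcongr; exact norm_ofCoeffs_le g n
    _ = ‖g n‖ * (r : ℝ) ^ n * max 1 ‖(1 : A)‖ := by ring
    _ ≤ C * max 1 ‖(1 : A)‖ := by gcongr; exact hg n

end OfCoeffs

theorem ContinuousMap.hasSum_of_summable_of_hasSum_apply {X β ι : Type*} [TopologicalSpace X]
    [TopologicalSpace β] [T2Space β] [AddCommMonoid β] [ContinuousAdd β] {F : ι → C(X, β)}
    {G : C(X, β)} (hF : Summable F) (hG : ∀ x, HasSum (fun i => F i x) (G x)) : HasSum F G := by
  convert hF.hasSum
  ext x
  exact (hG x).unique (ContinuousMap.hasSum_apply hF.hasSum x)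

theorem AnalyticOnNhd.analyticAt_continuousMap_comp {𝕜 K : Type*} [NontriviallyNormedField 𝕜]
    [CompleteSpace 𝕜] [CharZero 𝕜] [TopologicalSpace K] [CompactSpace K] {f : 𝕜 → 𝕜}
    (hf : Continuous f) {u : C(K, 𝕜)} (hfu : AnalyticOnNhd 𝕜 f (Set.range u)) :
    AnalyticAt 𝕜 (fun v : C(K, 𝕜) => ContinuousMap.comp ⟨f, hf⟩ v) u := by
  obtain ⟨r, hr, C, hC⟩ :=
    (isCompact_range u.continuous).exists_hasBoundedFPowerSeriesOnBall hfu
  have hcoeff : ∀ x, HasFPowerSeriesOnBall f (ofScalars 𝕜 fun n => iteratedDeriv n f (u x) / n !)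
      (u x) r ∧ ∀ n, ‖iteratedDeriv n f (u x) / (n ! : 𝕜)‖ * (r : ℝ) ^ n ≤ C := by
    intro x
    obtain ⟨p, hp, hpC⟩ := hC (u x) ⟨x, rfl⟩
    obtain rfl := hp.eq_ofScalars_iteratedDeriv
    exact ⟨hp, fun n => by simpa only [ofScalars_norm] using hpC n⟩
  let g (n : ℕ) : C(K, 𝕜) := ⟨fun x => iteratedDeriv n f (u x) / n !, by
    have h := (hfu.iterated_deriv n).continuousOn.comp_continuous u.continuous fun x => ⟨x, rfl⟩
    rw [← iteratedDeriv_eq_iterate] at h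
    exact h.div_const _⟩
  have hg (n : ℕ) : ‖g n‖ * (r : ℝ) ^ n ≤ C := by
    rw [← le_div_iff₀ (by positivity), ContinuousMap.norm_le _ (by positivity)]
    exact fun x => (le_div_iff₀ (by positivity)).2 ((hcoeff x).2 n)
  refine ⟨ofCoeffs 𝕜 g, r, le_radius_ofCoeffs hg, by exact_mod_cast hr, fun {y} hy => ?_⟩
  refine ContinuousMap.hasSum_of_summable_of_hasSum_apply
    ((ofCoeffs 𝕜 g).summable (Metric.eball_subset_eball (le_radius_ofCoeffs hg) hy)) fun x => ?_
  have hyx : y x ∈ Metric.eball (0 : 𝕜) r := by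
    rw [Metric.mem_eball, edist_zero_right] at hy ⊢
    exact lt_of_le_of_lt (enorm_le_iff_norm_le.2 (y.norm_coe_le_norm x)) hy
  simpa [ofCoeffs_apply_eq, ofScalars_apply_eq, g, mul_comm] using (hcoeff x).1.hasSum hyx

theorem stmt0_general {K : Type*} [TopologicalSpace K] [CompactSpace K]
    (δ : ℝ) (hδ : δ ∈ Set.Ioo (0 : ℝ) 2)
    (f : ℝ → ℝ) (hf : Continuous f)
    (hfa : ∀ s ∈ Set.Ioo (-1 + δ / 2) (1 - δ / 2), AnalyticAt ℝ f s)
    (u : C(K, ℝ)) (hu : ∀ x : K, -1 + δ < u x ∧ u x < 1 - δ) :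
    AnalyticAt ℝ (fun v : C(K, ℝ) => ContinuousMap.comp ⟨f, hf⟩ v) u := by
  refine AnalyticOnNhd.analyticAt_continuousMap_comp hf ?_
  rintro _ ⟨x, rfl⟩
  exact hfa (u x) ⟨by linarith [(hu x).1, hδ.1], by linarith [(hu x).2, hδ.1]⟩

/-- Superposition operators by functions analytic on an interval are analytic
on the set of continuous functions with values in a compact subinterval. -/
theorem stmt0 {K : Type*} [TopologicalSpace K] [CompactSpace K] [Nonempty K]
    (δ : ℝ) (hδ : δ ∈ Set.Ioo (0 : ℝ) 2)
    (f : ℝ → ℝ) (hf : Continuous f)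
    (hfa : ∀ s ∈ Set.Ioo (-1 + δ / 2) (1 - δ / 2), AnalyticAt ℝ f s)
    (u : C(K, ℝ)) (hu : ∀ x : K, -1 + δ < u x ∧ u x < 1 - δ) :
    AnalyticAt ℝ (fun v : C(K, ℝ) => ContinuousMap.comp ⟨f, hf⟩ v) u :=
  stmt0_general δ hδ f hf hfa u hu
end

section
/- Let 0 < θ < θ₀ and define Ψ'(s) = (θ/2)·log((1+s)/(1−s)) − θ₀·s for s ∈ (−1,1), and s* = √(1 − θ/θ₀). Then: s* ∈ (0,1); Ψ' is strictly increasing on (−1,−s*] and on [s*,1), and strictly decreasing on [−s*,s*]; Ψ'(s*) < 0 < Ψ'(−s*); Ψ'(s*) is the infimum of Ψ' over (0,1) and Ψ'(−s*) is the supremum of Ψ' over (−1,0); and there exist unique points α₀ ∈ (−1,0) and β₀ ∈ (0,1) with Ψ'(α₀) = Ψ'(s*) and Ψ'(β₀) = Ψ'(−s*); moreover α₀ < −s* and β₀ > s*. -/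
/-!
`Ψ'` is odd, vanishes at `0`, and `Ψ''(s) = θ / (1 - s²) - θ₀`, which is negative exactly for
`s² < 1 - θ / θ₀ = s*²`. This gives the three monotonicity intervals, and `Ψ'(s*) < Ψ'(0) = 0`.
Since `Ψ' → -∞` at `-1⁺`, the intermediate value theorem on `(-1, -s*]` produces `α₀`; any
solution in `(-1, 0)` lies left of `-s*`, because `Ψ' > Ψ'(0) = 0 > Ψ'(s*)` on `[-s*, 0)`, so
injectivity there gives uniqueness. Oddness turns `α₀` into `β₀ = -α₀`.
-/

open Real Set Filter Topology

noncomputable def floryHugginsDeriv (θ θ₀ s : ℝ) : ℝ :=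
  θ / 2 * log ((1 + s) / (1 - s)) - θ₀ * s

/-- The point `s*` of the paper: the zero of `Ψ''` in `(0, 1)`. -/
noncomputable def spinodal (θ θ₀ : ℝ) : ℝ :=
  √(1 - θ / θ₀)

theorem spinodal_mem_Ioo {θ θ₀ : ℝ} (hθ : 0 < θ) (hθθ₀ : θ < θ₀) : spinodal θ θ₀ ∈ Ioo 0 1 := by
  have hθ₀ : 0 < θ₀ := hθ.trans hθθ₀
  refine ⟨sqrt_pos.mpr (sub_pos.mpr ((div_lt_one hθ₀).mpr hθθ₀)), ?_⟩
  exact (sqrt_lt' one_pos).mpr (by linarith [div_pos hθ hθ₀])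

theorem sq_spinodal {θ θ₀ : ℝ} (hθ₀ : 0 < θ₀) (hθθ₀ : θ ≤ θ₀) :
    spinodal θ θ₀ ^ 2 = 1 - θ / θ₀ :=
  sq_sqrt (sub_nonneg.mpr ((div_le_one hθ₀).mpr hθθ₀))

namespace floryHugginsDeriv

variable {θ θ₀ : ℝ}

theorem apply_neg (s : ℝ) : floryHugginsDeriv θ θ₀ (-s) = -floryHugginsDeriv θ θ₀ s := by
  have hflip : (1 + -s) / (1 - -s) = ((1 + s) / (1 - s))⁻¹ := by rw [inv_div]; ring_nf
  rw [floryHugginsDeriv, floryHugginsDeriv, hflip, log_inv]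
  ring

@[simp]
theorem apply_zero : floryHugginsDeriv θ θ₀ 0 = 0 := by
  simp [floryHugginsDeriv]

theorem hasDerivAt {s : ℝ} (hs : s ∈ Ioo (-1 : ℝ) 1) :
    HasDerivAt (floryHugginsDeriv θ θ₀) (θ / (1 - s ^ 2) - θ₀) s := by
  have h₁ : 1 + s ≠ 0 := by linarith [hs.1]
  have h₂ : 1 - s ≠ 0 := by linarith [hs.2]
  have h₃ : 1 - s ^ 2 ≠ 0 := by
    rw [show 1 - s ^ 2 = (1 + s) * (1 - s) by ring]; exact mul_ne_zero h₁ h₂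
  have hquot : HasDerivAt (fun s : ℝ => (1 + s) / (1 - s)) (2 / (1 - s) ^ 2) s :=
    (((hasDerivAt_id' s).const_add 1).div ((hasDerivAt_id' s).const_sub 1) h₂).congr_deriv
      (by ring)
  exact (((hquot.log (div_ne_zero h₁ h₂)).const_mul (θ / 2)).sub
    ((hasDerivAt_id' s).const_mul θ₀)).congr_deriv (by field_simp; ring)

theorem continuousOn : ContinuousOn (floryHugginsDeriv θ θ₀) (Ioo (-1) 1) :=
  fun _ hs => (hasDerivAt hs).continuousAt.continuousWithinAt

theorem tendsto_nhdsGT_neg_one (hθ : 0 < θ) :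
    Tendsto (floryHugginsDeriv θ θ₀) (𝓝[>] (-1)) atBot := by
  have hratio : Tendsto (fun s : ℝ => (1 + s) / (1 - s)) (𝓝[>] (-1)) (𝓝[>] 0) := by
    refine tendsto_nhdsWithin_of_tendsto_nhds_of_eventually_within _ ?_ ?_
    · have : ContinuousAt (fun s : ℝ => (1 + s) / (1 - s)) (-1) := by
        fun_prop (disch := norm_num)
      simpa using this.tendsto.mono_left nhdsWithin_le_nhds
    · filter_upwards [Ioo_mem_nhdsGT (show (-1 : ℝ) < 1 by norm_num)] with s hs
      exact div_pos (by linarith [hs.1] : (0 : ℝ) < 1 + s) (by linarith [hs.2] : (0 : ℝ) < 1 - s)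
  have hlinear : Tendsto (fun s : ℝ => -(θ₀ * s)) (𝓝[>] (-1)) (𝓝 (-(θ₀ * -1))) :=
    ((continuous_const.mul continuous_id).neg.tendsto (-1)).mono_left nhdsWithin_le_nhds
  refine (((tendsto_log_nhdsGT_zero.comp hratio).const_mul_atBot (half_pos hθ)).atBot_add
    hlinear).congr fun s => ?_
  simp only [Function.comp_apply, floryHugginsDeriv]
  ring

theorem deriv_pos {x : ℝ} (hθ₀ : 0 < θ₀) (hθθ₀ : θ ≤ θ₀) (hx : x ∈ Ioo (-1) 1)
    (h : spinodal θ θ₀ ^ 2 < x ^ 2) : 0 < deriv (floryHugginsDeriv θ θ₀) x := by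
  rw [sq_spinodal hθ₀ hθθ₀] at h
  have hθx : (1 - x ^ 2) * θ₀ < θ := (lt_div_iff₀ hθ₀).mp (by linarith)
  rw [(hasDerivAt hx).deriv, sub_pos, lt_div_iff₀ (by nlinarith [hx.1, hx.2])]
  linarith

theorem deriv_neg {x : ℝ} (hθ₀ : 0 < θ₀) (hθθ₀ : θ ≤ θ₀) (hx : x ∈ Ioo (-1) 1)
    (h : x ^ 2 < spinodal θ θ₀ ^ 2) : deriv (floryHugginsDeriv θ θ₀) x < 0 := by
  rw [sq_spinodal hθ₀ hθθ₀] at h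
  have hθx : θ < (1 - x ^ 2) * θ₀ := (div_lt_iff₀ hθ₀).mp (by linarith)
  rw [(hasDerivAt hx).deriv, sub_neg, div_lt_iff₀ (by nlinarith [hx.1, hx.2])]
  linarith

theorem strictMonoOn_Ico_spinodal (hθ : 0 < θ) (hθθ₀ : θ < θ₀) :
    StrictMonoOn (floryHugginsDeriv θ θ₀) (Ico (spinodal θ θ₀) 1) := by
  have hs₀ := (spinodal_mem_Ioo hθ hθθ₀).1
  have hθ₀ : 0 < θ₀ := hθ.trans hθθ₀
  have hsub : Ico (spinodal θ θ₀) 1 ⊆ Ioo (-1) 1 := fun x hx => ⟨by linarith [hx.1], hx.2⟩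
  refine strictMonoOn_of_deriv_pos (convex_Ico _ _) (continuousOn.mono hsub) fun x hx => ?_
  rw [interior_Ico] at hx
  exact deriv_pos hθ₀ hθθ₀.le (hsub (Ioo_subset_Ico_self hx))
    (pow_lt_pow_left₀ hx.1 hs₀.le two_ne_zero)

theorem strictMonoOn_Ioc_neg_spinodal (hθ : 0 < θ) (hθθ₀ : θ < θ₀) :
    StrictMonoOn (floryHugginsDeriv θ θ₀) (Ioc (-1) (-spinodal θ θ₀)) := by
  intro x hx y hy hxy
  have hmono := strictMonoOn_Ico_spinodal hθ hθθ₀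
    (⟨le_neg.mpr hy.2, neg_lt.mpr hy.1⟩ : -y ∈ Ico _ 1) ⟨le_neg.mpr hx.2, neg_lt.mpr hx.1⟩
    (neg_lt_neg hxy)
  rw [apply_neg, apply_neg] at hmono
  exact neg_lt_neg_iff.mp hmono

theorem strictAntiOn_Icc_spinodal (hθ : 0 < θ) (hθθ₀ : θ < θ₀) :
    StrictAntiOn (floryHugginsDeriv θ θ₀) (Icc (-spinodal θ θ₀) (spinodal θ θ₀)) := by
  have hs₁ := (spinodal_mem_Ioo hθ hθθ₀).2
  have hθ₀ : 0 < θ₀ := hθ.trans hθθ₀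
  have hsub : Icc (-spinodal θ θ₀) (spinodal θ θ₀) ⊆ Ioo (-1) 1 :=
    fun x hx => ⟨by linarith [hx.1], by linarith [hx.2]⟩
  refine strictAntiOn_of_deriv_neg (convex_Icc _ _) (continuousOn.mono hsub) fun x hx => ?_
  rw [interior_Icc] at hx
  exact deriv_neg hθ₀ hθθ₀.le (hsub (Ioo_subset_Icc_self hx)) (sq_lt_sq' hx.1 hx.2)

theorem apply_spinodal_neg (hθ : 0 < θ) (hθθ₀ : θ < θ₀) :
    floryHugginsDeriv θ θ₀ (spinodal θ θ₀) < 0 := by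
  have hs₀ := (spinodal_mem_Ioo hθ hθθ₀).1
  simpa using strictAntiOn_Icc_spinodal hθ hθθ₀ ⟨by linarith, hs₀.le⟩
    ⟨by linarith, le_rfl⟩ hs₀

theorem apply_neg_spinodal_pos (hθ : 0 < θ) (hθθ₀ : θ < θ₀) :
    0 < floryHugginsDeriv θ θ₀ (-spinodal θ θ₀) := by
  rw [apply_neg]
  exact neg_pos.mpr (apply_spinodal_neg hθ hθθ₀)

theorem isLeast_image_Ioo_zero_one (hθ : 0 < θ) (hθθ₀ : θ < θ₀) :
    IsLeast (floryHugginsDeriv θ θ₀ '' Ioo 0 1) (floryHugginsDeriv θ θ₀ (spinodal θ θ₀)) := by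
  obtain ⟨hs₀, hs₁⟩ := spinodal_mem_Ioo hθ hθθ₀
  refine ⟨mem_image_of_mem _ ⟨hs₀, hs₁⟩, ?_⟩
  rintro _ ⟨x, hx, rfl⟩
  rcases le_or_gt x (spinodal θ θ₀) with hxs | hsx
  · exact (strictAntiOn_Icc_spinodal hθ hθθ₀).antitoneOn ⟨by linarith [hx.1], hxs⟩
      ⟨by linarith, le_rfl⟩ hxs
  · exact (strictMonoOn_Ico_spinodal hθ hθθ₀).monotoneOn ⟨le_rfl, hs₁⟩ ⟨hsx.le, hx.2⟩ hsx.le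

theorem isGreatest_image_Ioo_neg_one_zero (hθ : 0 < θ) (hθθ₀ : θ < θ₀) :
    IsGreatest (floryHugginsDeriv θ θ₀ '' Ioo (-1) 0)
      (floryHugginsDeriv θ θ₀ (-spinodal θ θ₀)) := by
  obtain ⟨hs₀, hs₁⟩ := spinodal_mem_Ioo hθ hθθ₀
  refine ⟨⟨-spinodal θ θ₀, ⟨neg_lt_neg hs₁, neg_neg_iff_pos.mpr hs₀⟩, rfl⟩, ?_⟩
  rintro _ ⟨x, hx, rfl⟩
  have := (isLeast_image_Ioo_zero_one hθ hθθ₀).2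
    (mem_image_of_mem _ (⟨neg_pos.mpr hx.2, neg_lt.mpr hx.1⟩ : -x ∈ Ioo 0 1))
  rw [apply_neg] at this ⊢
  linarith

theorem lt_neg_spinodal_of_eq {α : ℝ} (hθ : 0 < θ) (hθθ₀ : θ < θ₀) (hα : α ∈ Ioo (-1) 0)
    (h : floryHugginsDeriv θ θ₀ α = floryHugginsDeriv θ θ₀ (spinodal θ θ₀)) :
    α < -spinodal θ θ₀ := by
  by_contra! hsα
  have hs₀ := (spinodal_mem_Ioo hθ hθθ₀).1
  have := strictAntiOn_Icc_spinodal hθ hθθ₀ ⟨hsα, by linarith [hα.2]⟩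
    ⟨by linarith, hs₀.le⟩ hα.2
  rw [apply_zero, h] at this
  exact (apply_spinodal_neg hθ hθθ₀).not_gt this

theorem spinodal_lt_of_eq {β : ℝ} (hθ : 0 < θ) (hθθ₀ : θ < θ₀) (hβ : β ∈ Ioo 0 1)
    (h : floryHugginsDeriv θ θ₀ β = floryHugginsDeriv θ θ₀ (-spinodal θ θ₀)) :
    spinodal θ θ₀ < β := by
  have := lt_neg_spinodal_of_eq hθ hθθ₀ ⟨neg_lt_neg hβ.2, neg_neg_iff_pos.mpr hβ.1⟩
    (by rw [apply_neg, h, apply_neg, neg_neg])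
  linarith

theorem existsUnique_eq_spinodal (hθ : 0 < θ) (hθθ₀ : θ < θ₀) :
    ∃! α, α ∈ Ioo (-1) 0 ∧ floryHugginsDeriv θ θ₀ α = floryHugginsDeriv θ θ₀ (spinodal θ θ₀) := by
  set s := spinodal θ θ₀
  obtain ⟨hs₀, hs₁⟩ := spinodal_mem_Ioo hθ hθθ₀
  obtain ⟨a, hfa, ha⟩ := (((tendsto_nhdsGT_neg_one hθ).eventually
    (eventually_lt_atBot (floryHugginsDeriv θ θ₀ s))).and
    (Ioo_mem_nhdsGT (show -1 < -s by linarith))).exists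
  have hsub : Icc a (-s) ⊆ Ioo (-1) 1 := fun x hx => ⟨by linarith [ha.1, hx.1], by linarith [hx.2]⟩
  have hfs : floryHugginsDeriv θ θ₀ s ≤ floryHugginsDeriv θ θ₀ (-s) :=
    (apply_spinodal_neg hθ hθθ₀).le.trans (apply_neg_spinodal_pos hθ hθθ₀).le
  obtain ⟨α, hα, hfα⟩ := intermediate_value_Icc ha.2.le (continuousOn.mono hsub) ⟨hfa.le, hfs⟩
  have hαIoo : α ∈ Ioo (-1) 0 := ⟨by linarith [ha.1, hα.1], by linarith [hα.2]⟩
  refine ⟨α, ⟨hαIoo, hfα⟩, fun β ⟨hβ, hfβ⟩ => ?_⟩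
  exact (strictMonoOn_Ioc_neg_spinodal hθ hθθ₀).injOn
    ⟨hβ.1, (lt_neg_spinodal_of_eq hθ hθθ₀ hβ hfβ).le⟩
    ⟨hαIoo.1, (lt_neg_spinodal_of_eq hθ hθθ₀ hαIoo hfα).le⟩ (hfβ.trans hfα.symm)

theorem existsUnique_eq_neg_spinodal (hθ : 0 < θ) (hθθ₀ : θ < θ₀) :
    ∃! β, β ∈ Ioo 0 1 ∧
      floryHugginsDeriv θ θ₀ β = floryHugginsDeriv θ θ₀ (-spinodal θ θ₀) := by
  obtain ⟨α, ⟨hα, hfα⟩, huniq⟩ := existsUnique_eq_spinodal hθ hθθ₀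
  refine ⟨-α, ⟨⟨neg_pos.mpr hα.2, neg_lt.mpr hα.1⟩, by rw [apply_neg, hfα, apply_neg]⟩,
    fun β ⟨hβ, hfβ⟩ => ?_⟩
  have hβ' : -β ∈ Ioo (-1) 0 := ⟨neg_lt_neg hβ.2, neg_neg_iff_pos.mpr hβ.1⟩
  rw [← huniq (-β) ⟨hβ', by rw [apply_neg, hfβ, apply_neg, neg_neg]⟩, neg_neg]

end floryHugginsDeriv

open floryHugginsDeriv in
/-- Shape of the derivative `Ψ'` of the Flory–Huggins potential with `0 < θ < θ₀`:
monotonicity intervals determined by `s* = √(1-θ/θ₀)`, sign of the critical values,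
extremality of `Ψ'(±s*)`, and existence/uniqueness of the points `α₀ ∈ (-1,0)` and
`β₀ ∈ (0,1)` where `Ψ'` takes the values `Ψ'(s*)` and `Ψ'(-s*)` respectively. -/
theorem stmt8 (θ θ₀ : ℝ) (hθ : 0 < θ) (hθθ₀ : θ < θ₀)
    (Ψ' : ℝ → ℝ)
    (hΨ' : ∀ s, Ψ' s = θ / 2 * Real.log ((1 + s) / (1 - s)) - θ₀ * s)
    (sstar : ℝ) (hsstar : sstar = Real.sqrt (1 - θ / θ₀)) :
    sstar ∈ Set.Ioo (0 : ℝ) 1 ∧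
    StrictMonoOn Ψ' (Set.Ioc (-1) (-sstar)) ∧
    StrictMonoOn Ψ' (Set.Ico sstar 1) ∧
    StrictAntiOn Ψ' (Set.Icc (-sstar) sstar) ∧
    Ψ' sstar < 0 ∧ 0 < Ψ' (-sstar) ∧
    IsGLB (Ψ' '' Set.Ioo (0 : ℝ) 1) (Ψ' sstar) ∧
    IsLUB (Ψ' '' Set.Ioo (-1 : ℝ) 0) (Ψ' (-sstar)) ∧
    (∃! α₀, α₀ ∈ Set.Ioo (-1 : ℝ) 0 ∧ Ψ' α₀ = Ψ' sstar) ∧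
    (∃! β₀, β₀ ∈ Set.Ioo (0 : ℝ) 1 ∧ Ψ' β₀ = Ψ' (-sstar)) ∧
    (∀ α₀, α₀ ∈ Set.Ioo (-1 : ℝ) 0 ∧ Ψ' α₀ = Ψ' sstar → α₀ < -sstar) ∧
    (∀ β₀, β₀ ∈ Set.Ioo (0 : ℝ) 1 ∧ Ψ' β₀ = Ψ' (-sstar) → sstar < β₀) := by
  obtain rfl : Ψ' = floryHugginsDeriv θ θ₀ := funext hΨ'
  obtain rfl : sstar = spinodal θ θ₀ := hsstar
  exact ⟨spinodal_mem_Ioo hθ hθθ₀, strictMonoOn_Ioc_neg_spinodal hθ hθθ₀,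
    strictMonoOn_Ico_spinodal hθ hθθ₀, strictAntiOn_Icc_spinodal hθ hθθ₀,
    apply_spinodal_neg hθ hθθ₀, apply_neg_spinodal_pos hθ hθθ₀,
    (isLeast_image_Ioo_zero_one hθ hθθ₀).isGLB,
    (isGreatest_image_Ioo_neg_one_zero hθ hθθ₀).isLUB, existsUnique_eq_spinodal hθ hθθ₀,
    existsUnique_eq_neg_spinodal hθ hθθ₀, fun _ h => lt_neg_spinodal_of_eq hθ hθθ₀ h.1 h.2,
    fun _ h => spinodal_lt_of_eq hθ hθθ₀ h.1 h.2⟩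
end

section
/- Let X be a real normed vector space, K ⊆ X a nonempty compact set, P : X → Prop a predicate, E : X → ℝ and G : X → ℝ functions with G(u) ≥ 0 for all u ∈ X, and E∞ ∈ ℝ. Assume |E(u) − E∞| ≤ 1 for every u satisfying P, and assume that for every ψ ∈ K there exist θ_ψ ∈ (0,1/2), C_ψ > 0 and β_ψ > 0 such that |E(u) − E∞|^{1−θ_ψ} ≤ C_ψ·G(u) for every u satisfying P with ‖u − ψ‖ < β_ψ. Then there exist θ̃ ∈ (0,1/2), C̃ > 0 and an open set 𝒰 ⊇ K such that |E(u) − E∞|^{1−θ̃} ≤ C̃·G(u) for every u ∈ 𝒰 satisfying P. -/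
/-- Upgrading a pointwise Łojasiewicz–Simon inequality near each point of a compact
set to a uniform one, with a single exponent and constant, on an open neighborhood. -/
theorem stmt10 {X : Type*} [NormedAddCommGroup X] [NormedSpace ℝ X]
    (K : Set X) (hK : IsCompact K) (hKne : K.Nonempty)
    (P : X → Prop) (E : X → ℝ) (G : X → ℝ) (hG : ∀ u, 0 ≤ G u) (Einf : ℝ)
    (hbd : ∀ u, P u → |E u - Einf| ≤ 1)
    (hloc : ∀ ψ ∈ K, ∃ θ C β : ℝ, θ ∈ Set.Ioo (0 : ℝ) (1 / 2) ∧ 0 < C ∧ 0 < β ∧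
      ∀ u, P u → ‖u - ψ‖ < β → |E u - Einf| ^ (1 - θ) ≤ C * G u) :
    ∃ θ C : ℝ, θ ∈ Set.Ioo (0 : ℝ) (1 / 2) ∧ 0 < C ∧
      ∃ U : Set X, IsOpen U ∧ K ⊆ U ∧
        ∀ u ∈ U, P u → |E u - Einf| ^ (1 - θ) ≤ C * G u := by
  classical
  choose! θ C β hθ hC hβ hineq using hloc
  obtain ⟨t, htK, hcov⟩ := hK.elim_nhds_subcover (fun ψ => Metric.ball ψ (β ψ))
    (fun ψ hψ => Metric.ball_mem_nhds ψ (hβ ψ hψ))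
  have ht : t.Nonempty := by
    obtain ⟨x, hx⟩ := hKne
    obtain ⟨ψ, hψt, -⟩ := Set.mem_iUnion₂.mp (hcov hx)
    exact ⟨ψ, hψt⟩
  set θ' : ℝ := t.inf' ht θ with hθ'def
  set C' : ℝ := max 1 (t.sup' ht C) with hC'def
  have hθ'mem : θ' ∈ Set.Ioo (0 : ℝ) (1 / 2) := by
    constructor
    · rw [hθ'def, Finset.lt_inf'_iff]
      exact fun ψ hψ => (hθ ψ (htK ψ hψ)).1
    · rw [hθ'def, Finset.inf'_lt_iff]
      obtain ⟨ψ, hψ⟩ := ht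
      exact ⟨ψ, hψ, (hθ ψ (htK ψ hψ)).2⟩
  have hC'pos : (0 : ℝ) < C' := lt_max_of_lt_left one_pos
  refine ⟨θ', C', hθ'mem, hC'pos, ⋃ ψ ∈ t, Metric.ball ψ (β ψ),
    isOpen_biUnion fun ψ _ => Metric.isOpen_ball, hcov, ?_⟩
  intro u hu hPu
  obtain ⟨ψ, hψt, hub⟩ := Set.mem_iUnion₂.mp hu
  have hψK := htK ψ hψt
  have key : |E u - Einf| ^ (1 - θ ψ) ≤ C ψ * G u := by
    apply hineq ψ hψK u hPu
    simpa [dist_eq_norm] using hub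
  have hCle : C ψ ≤ C' := le_max_of_le_right (Finset.le_sup' C hψt)
  have hstep : |E u - Einf| ^ (1 - θ') ≤ |E u - Einf| ^ (1 - θ ψ) := by
    rcases eq_or_lt_of_le (abs_nonneg (E u - Einf)) with h0 | h0
    · rw [← h0, Real.zero_rpow, Real.zero_rpow] <;> nlinarith [hθ'mem.2, (hθ ψ hψK).2]
    · apply Real.rpow_le_rpow_of_exponent_ge h0 (hbd u hPu)
      have : θ' ≤ θ ψ := Finset.inf'_le θ hψt
      linarith
  calc |E u - Einf| ^ (1 - θ') ≤ C ψ * G u := hstep.trans key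
    _ ≤ C' * G u := mul_le_mul_of_nonneg_right hCle (hG u)
end

section
/- Let X be a metric space and let S : ℝ≥0 → X → X be a semiflow: S(0) is the identity, S(t+s)(x) = S(t)(S(s)(x)) for all t, s ≥ 0 and x ∈ X, and the map S(t) : X → X is continuous for every t ≥ 0. Let E : X → ℝ be continuous and suppose that t ↦ E(S(t)(x)) is nonincreasing on [0,∞) for every x ∈ X, and that every z ∈ X satisfying E(S(t)(z)) = E(z) for all t ≥ 0 is a stationary point, i.e. S(t)(z) = z for all t ≥ 0. Fix x₀ ∈ X and assume that E is bounded below on the orbit {S(t)(x₀) : t ≥ 0}. Then every ω-limit point of the orbit is stationary: whenever tₙ → ∞ and S(tₙ)(x₀) → y in X, one has S(t)(y) = y for all t ≥ 0. -/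
open scoped NNReal

/-- For a semiflow with a continuous strict Lyapunov function bounded below on an
orbit, every ω-limit point of that orbit is a stationary point. -/
theorem stmt11 {X : Type*} [MetricSpace X] (S : ℝ≥0 → X → X)
    (hS0 : ∀ x, S 0 x = x)
    (hSadd : ∀ (t s : ℝ≥0) (x : X), S (t + s) x = S t (S s x))
    (hScont : ∀ t : ℝ≥0, Continuous (S t))
    (E : X → ℝ) (hE : Continuous E)
    (hmono : ∀ x : X, Antitone fun t : ℝ≥0 => E (S t x))
    (hstrict : ∀ z : X, (∀ t : ℝ≥0, E (S t z) = E z) → ∀ t : ℝ≥0, S t z = z)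
    (x₀ : X) (hbelow : ∃ c : ℝ, ∀ t : ℝ≥0, c ≤ E (S t x₀)) :
    ∀ (tn : ℕ → ℝ≥0) (y : X),
      Filter.Tendsto tn Filter.atTop Filter.atTop →
      Filter.Tendsto (fun n => S (tn n) x₀) Filter.atTop (nhds y) →
      ∀ t : ℝ≥0, S t y = y := by
  intro tn y htn hconv
  obtain ⟨c, hc⟩ := hbelow
  set f : ℝ≥0 → ℝ := fun t => E (S t x₀) with hf
  have hbdd : BddBelow (Set.range f) := ⟨c, by rintro _ ⟨t, rfl⟩; exact hc t⟩
  set L : ℝ := ⨅ t, f t with hL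
  have hlim : Filter.Tendsto f Filter.atTop (nhds L) :=
    tendsto_atTop_ciInf (hmono x₀) hbdd
  -- along any sequence tending to atTop, f tends to L
  have key : ∀ (u : ℕ → ℝ≥0), Filter.Tendsto u Filter.atTop Filter.atTop →
      Filter.Tendsto (fun n => f (u n)) Filter.atTop (nhds L) :=
    fun u hu => hlim.comp hu
  -- E y = L
  have hEy : E y = L :=
    tendsto_nhds_unique (hE.continuousAt.tendsto.comp hconv) (key tn htn)
  have hstat : ∀ t : ℝ≥0, E (S t y) = E y := by
    intro t
    have h1 : Filter.Tendsto (fun n => S t (S (tn n) x₀)) Filter.atTop (nhds (S t y)) :=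
      ((hScont t).continuousAt.tendsto).comp hconv
    have h2 : Filter.Tendsto (fun n => E (S t (S (tn n) x₀))) Filter.atTop (nhds (E (S t y))) :=
      (hE.continuousAt.tendsto).comp h1
    have h3 : Filter.Tendsto (fun n => f (t + tn n)) Filter.atTop (nhds L) := by
      refine key _ ?_
      exact Filter.tendsto_atTop_mono (fun n => le_add_self) htn
    have heq : (fun n => f (t + tn n)) = fun n => E (S t (S (tn n) x₀)) := by
      funext n; simp [hf, hSadd]
    rw [heq] at h3
    rw [hEy]
    exact tendsto_nhds_unique h2 h3
  exact hstrict y hstat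
end

section
/- Let (Ω, 𝒜, μ) be a measure space with 0 < μ(Ω) < ∞, and let ψ : Ω → ℝ be measurable with −1 < ψ(x) < 1 for μ-almost every x, and set m = (1/μ(Ω))·∫_Ω ψ dμ. Let a ∈ (−1, m] be such that μ({x : ψ(x) < a}) > 0. Then for every ε > 0 there exist a_ε ∈ (−1, a) and m_ε ∈ (m, 1) such that the truncated function u(x) = max(a_ε, min(m_ε, ψ(x))) satisfies: (1/μ(Ω))·∫_Ω u dμ = m; μ({x : ψ(x) < a_ε}) > 0; μ({x : ψ(x) > m_ε}) > 0; and (∫_Ω |u − ψ|² dμ)^{1/2} ≤ ε. -/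
/-!
Write `A s = ∫ (s - ψ)⁺` and `B t = ∫ (ψ - t)⁺`. Since
`max s (min t ψ) = ψ + (s - ψ)⁺ - (ψ - t)⁺`, the truncation keeps the mean exactly when
`A s = B t`, and, as `ψ` and both levels lie in `[-1, 1]`, its squared `L²` distance to `ψ` is
at most `2 (A s + B t)`. Both `A` and `B` are Lipschitz, `A (-1) = 0 = B 1`, `A a > 0`, and
`B m = A m > 0` because `ψ` has mean `m`. So for every small `y > 0` the intermediate value
theorem gives `s ∈ (-1, a)` and `t ∈ (m, 1)` with `A s = B t = y`; take `4 y ≤ ε²`.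
-/

open MeasureTheory Set

lemma max_min_eq_add_sub {s t : ℝ} (hst : s ≤ t) (r : ℝ) :
    max s (min t r) = r + max (s - r) 0 - max (r - t) 0 := by
  simp only [max_def, min_def]
  split_ifs <;> linarith

lemma sq_max_min_sub_le {lo hi s t r : ℝ} (hs : lo ≤ s) (hst : s ≤ t) (ht : t ≤ hi)
    (hr : r ∈ Icc lo hi) :
    (max s (min t r) - r) ^ 2 ≤ (hi - lo) * (max (s - r) 0 + max (r - t) 0) := by
  obtain ⟨hlo, hhi⟩ := hr
  rw [max_min_eq_add_sub hst]
  rcases le_total r s with h | h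
  · rw [max_eq_left (by linarith), max_eq_right (by linarith)]
    nlinarith
  · rcases le_total r t with h' | h'
    · rw [max_eq_right (by linarith), max_eq_right (by linarith)]
      simp
    · rw [max_eq_right (by linarith), max_eq_left (by linarith)]
      nlinarith

namespace MeasureTheory

variable {α : Type*} [MeasurableSpace α] {μ : Measure α} {f : α → ℝ}

lemma integral_max_sub_const_eq_zero {t : ℝ} (hf_le : ∀ᵐ x ∂μ, f x ≤ t) :
    ∫ x, max (f x - t) 0 ∂μ = 0 :=
  integral_eq_zero_of_ae (hf_le.mono fun _ hx => max_eq_right (sub_nonpos.2 hx))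

variable [IsFiniteMeasure μ]

lemma Integrable.max_sub_const (hf : Integrable f μ) (t : ℝ) :
    Integrable (fun x => max (f x - t) 0) μ :=
  (hf.sub (integrable_const t)).pos_part

lemma Integrable.max_const_sub (hf : Integrable f μ) (s : ℝ) :
    Integrable (fun x => max (s - f x) 0) μ :=
  ((integrable_const s).sub hf).pos_part

lemma integral_max_min_eq (hf : Integrable f μ) {s t : ℝ} (hst : s ≤ t) :
    ∫ x, max s (min t (f x)) ∂μ =
      ∫ x, f x ∂μ + ∫ x, max (s - f x) 0 ∂μ - ∫ x, max (f x - t) 0 ∂μ := by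
  simp_rw [max_min_eq_add_sub hst]
  have hA : Integrable (fun x => f x + max (s - f x) 0) μ := hf.add (hf.max_const_sub s)
  rw [integral_sub hA (hf.max_sub_const t), integral_add hf (hf.max_const_sub s)]

lemma lipschitzWith_integral_max_sub_const (hf : Integrable f μ) :
    LipschitzWith (μ.real univ).toNNReal fun t => ∫ x, max (f x - t) 0 ∂μ := by
  refine LipschitzWith.of_dist_le_mul fun t t' => ?_
  rw [dist_eq_norm, dist_eq_norm, ← integral_sub (hf.max_sub_const t) (hf.max_sub_const t'),
    Real.coe_toNNReal _ measureReal_nonneg, mul_comm]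
  refine norm_integral_le_of_norm_le_const (ae_of_all _ fun x => ?_)
  rw [Real.norm_eq_abs, Real.norm_eq_abs]
  refine (abs_max_sub_max_le_abs _ _ _).trans_eq ?_
  rw [sub_sub_sub_cancel_left, abs_sub_comm]

lemma integral_max_sub_const_pos_iff (hf : Integrable f μ) (t : ℝ) :
    0 < ∫ x, max (f x - t) 0 ∂μ ↔ 0 < μ {x | t < f x} := by
  have hsupp : Function.support (fun x => max (f x - t) 0) = {x | t < f x} := by
    ext x
    simp
  rw [integral_pos_iff_support_of_nonneg_ae (f := fun x => max (f x - t) 0)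
    (ae_of_all _ fun _ => le_max_right _ _) (hf.max_sub_const t), hsupp]

lemma exists_integral_max_sub_const_eq (hf : Integrable f μ) {t₀ t₁ y : ℝ}
    (hf_le : ∀ᵐ x ∂μ, f x ≤ t₁) (hy : y ∈ Ioo 0 (∫ x, max (f x - t₀) 0 ∂μ)) :
    ∃ t ∈ Ioo t₀ t₁, ∫ x, max (f x - t) 0 ∂μ = y ∧ 0 < μ {x | t < f x} := by
  have ht : t₀ ≤ t₁ := by
    by_contra! h
    have := integral_max_sub_const_eq_zero (hf_le.mono fun _ hx => hx.trans h.le)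
    linarith [hy.1, hy.2]
  obtain ⟨t, ht, hty : ∫ x, max (f x - t) 0 ∂μ = y⟩ := intermediate_value_Ioo' ht
    (lipschitzWith_integral_max_sub_const hf).continuous.continuousOn
    (by rwa [integral_max_sub_const_eq_zero hf_le])
  exact ⟨t, ht, hty, (integral_max_sub_const_pos_iff hf t).1 (hty ▸ hy.1)⟩

lemma integral_max_const_sub_pos_iff (hf : Integrable f μ) (s : ℝ) :
    0 < ∫ x, max (s - f x) 0 ∂μ ↔ 0 < μ {x | f x < s} := by
  simpa only [Pi.neg_apply, neg_sub_neg, neg_lt_neg_iff] using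
    integral_max_sub_const_pos_iff hf.neg (-s)

lemma exists_integral_max_const_sub_eq (hf : Integrable f μ) {t₀ t₁ y : ℝ}
    (hf_ge : ∀ᵐ x ∂μ, t₀ ≤ f x) (hy : y ∈ Ioo 0 (∫ x, max (t₁ - f x) 0 ∂μ)) :
    ∃ s ∈ Ioo t₀ t₁, ∫ x, max (s - f x) 0 ∂μ = y ∧ 0 < μ {x | f x < s} := by
  obtain ⟨s, hs, hsy, hsμ⟩ := exists_integral_max_sub_const_eq (t₀ := -t₁) hf.neg
    (hf_ge.mono fun _ hx => neg_le_neg hx) (by simpa only [Pi.neg_apply, neg_sub_neg] using hy)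
  refine ⟨-s, ⟨lt_neg_of_lt_neg hs.2, neg_lt_of_neg_lt hs.1⟩, ?_, ?_⟩
  · simpa only [Pi.neg_apply, neg_sub_comm] using hsy
  · simpa only [Pi.neg_apply, lt_neg] using hsμ

lemma integral_sq_max_min_sub_le {lo hi s t : ℝ} (hf : Integrable f μ)
    (hf_mem : ∀ᵐ x ∂μ, f x ∈ Icc lo hi) (hs : lo ≤ s) (hst : s ≤ t) (ht : t ≤ hi) :
    ∫ x, (max s (min t (f x)) - f x) ^ 2 ∂μ ≤
      (hi - lo) * (∫ x, max (s - f x) 0 ∂μ + ∫ x, max (f x - t) 0 ∂μ) := by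
  rw [← integral_add (hf.max_const_sub s) (hf.max_sub_const t), ← integral_const_mul]
  refine integral_mono_of_nonneg (ae_of_all _ fun _ => sq_nonneg _)
    (((hf.max_const_sub s).add (hf.max_sub_const t)).const_mul _) ?_
  exact hf_mem.mono fun x hx => sq_max_min_sub_le hs hst ht hx

end MeasureTheory

/-- The mass-preserving double-truncation construction: if `ψ` takes values in
`(-1,1)` a.e., has mean `m`, and drops below a level `a ≤ m` on a set of positive
measure, then for every `ε > 0` there are nontrivially attained truncation levels
`aε ∈ (-1,a)` and `mε ∈ (m,1)` such that the chopped function has the same mean `m`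
and is within `ε` of `ψ` in `L²(μ)`. -/
theorem stmt13 {Ω : Type*} [MeasurableSpace Ω] (μ : Measure Ω)
    (hμ0 : 0 < μ Set.univ) (hμtop : μ Set.univ < ⊤)
    (ψ : Ω → ℝ) (hmeas : Measurable ψ)
    (hval : ∀ᵐ x ∂μ, ψ x ∈ Set.Ioo (-1 : ℝ) 1)
    (m : ℝ) (hm : m = (μ Set.univ).toReal⁻¹ * ∫ x, ψ x ∂μ)
    (a : ℝ) (ha : a ∈ Set.Ioc (-1 : ℝ) m)
    (hneg : 0 < μ {x | ψ x < a}) :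
    ∀ ε : ℝ, 0 < ε → ∃ aε mε : ℝ,
      aε ∈ Set.Ioo (-1 : ℝ) a ∧ mε ∈ Set.Ioo m 1 ∧
      (μ Set.univ).toReal⁻¹ * (∫ x, max aε (min mε (ψ x)) ∂μ) = m ∧
      0 < μ {x | ψ x < aε} ∧ 0 < μ {x | mε < ψ x} ∧
      (∫ x, |max aε (min mε (ψ x)) - ψ x| ^ 2 ∂μ) ^ ((1 : ℝ) / 2) ≤ ε := by
  intro ε hε
  have : IsFiniteMeasure μ := ⟨hμtop⟩
  have hψ_mem : ∀ᵐ x ∂μ, ψ x ∈ Icc (-1 : ℝ) 1 :=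
    hval.mono fun _ hx => Ioo_subset_Icc_self hx
  have hψ : Integrable ψ μ :=
    .of_bound hmeas.aestronglyMeasurable 1 (hψ_mem.mono fun _ hx => abs_le.2 hx)
  -- Truncating at `m` from both sides gives the constant `m`, which has the same integral as `ψ`.
  have hAm_eq_Bm : ∫ x, max (m - ψ x) 0 ∂μ = ∫ x, max (ψ x - m) 0 ∂μ := by
    have h := integral_max_min_eq (μ := μ) hψ (le_refl m)
    have hψ_int : μ.real univ * m = ∫ x, ψ x ∂μ := by
      rw [hm, measureReal_def, mul_inv_cancel_left₀ (ENNReal.toReal_pos hμ0.ne' hμtop.ne).ne']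
    simp only [sup_inf_self, integral_const, smul_eq_mul] at h
    linarith
  have hAa : 0 < ∫ x, max (a - ψ x) 0 ∂μ := (integral_max_const_sub_pos_iff hψ a).2 hneg
  have hBm : 0 < ∫ x, max (ψ x - m) 0 ∂μ :=
    hAm_eq_Bm ▸ (integral_max_const_sub_pos_iff hψ m).2
      (hneg.trans_le (measure_mono fun _ hx => lt_of_lt_of_le hx ha.2))
  obtain ⟨y, hy0, hy⟩ :=
    exists_between (lt_min (lt_min hAa hBm) (by positivity : 0 < ε ^ 2 / 4))
  obtain ⟨⟨hyA, hyB⟩, hyε⟩ := (lt_min_iff.1 hy).imp_left lt_min_iff.1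
  obtain ⟨s, hs, hAs, hμs⟩ := exists_integral_max_const_sub_eq (t₀ := -1) hψ
    (hψ_mem.mono fun _ hx => hx.1) ⟨hy0, hyA⟩
  obtain ⟨t, ht, hBt, hμt⟩ := exists_integral_max_sub_const_eq (t₀ := m) hψ
    (hψ_mem.mono fun _ hx => hx.2) ⟨hy0, hyB⟩
  have hst : s ≤ t := by linarith [hs.2, ht.1, ha.2]
  refine ⟨s, t, hs, ht, ?_, hμs, hμt, ?_⟩
  · rw [integral_max_min_eq hψ hst, hAs, hBt, hm]
    ring
  · rw [← Real.sqrt_eq_rpow, Real.sqrt_le_iff]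
    refine ⟨hε.le, ?_⟩
    simp_rw [sq_abs]
    have h := integral_sq_max_min_sub_le hψ hψ_mem hs.1.le hst ht.2.le
    rw [hAs, hBt] at h
    linarith
end
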